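/- arXiv:2103.15291 — 2 statements merged into one kernel-verified Lean document; each statement's English description precedes it below -/
import Mathlib

section
/- For integers n, r, k with n ≥ r ≥ 1, the r-Stirling transform of the poly-Cauchy numbers of the first kind satisfies: ∑_{j=r}^{n} S_r(n,j) · c_j^{(k)} = ∑_{ℓ=1}^{r} (-1)^{r-ℓ} / (n-r+ℓ+1)^k · s(r,ℓ), where S_r(n,j) denotes the r-Stirling number of the second kind and s(r,ℓ) the unsigned Stirling number of the first kind. -/
open Finset

/-- Unsigned Stirling numbers of the first kind. -/
def stirling1 : ℕ → ℕ → ℕ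
  | 0, 0 => 1
  | 0, _ + 1 => 0
  | _ + 1, 0 => 0
  | n + 1, k + 1 => n * stirling1 n (k + 1) + stirling1 n k

/-- Stirling numbers of the second kind. -/
def stirling2 : ℕ → ℕ → ℕ
  | 0, 0 => 1
  | 0, _ + 1 => 0
  | _ + 1, 0 => 0
  | n + 1, k + 1 => (k + 1) * stirling2 n (k + 1) + stirling2 n k

/-- Unsigned r-Stirling numbers of the first kind. -/
def rStirling1 (r : ℕ) : ℕ → ℕ → ℕ
  | 0, m => if r = 0 ∧ m = 0 then 1 else 0
  | n + 1, m =>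
    if n + 1 < r then 0
    else if n + 1 = r then (if m = r then 1 else 0)
    else n * rStirling1 r n m + (match m with | 0 => 0 | m' + 1 => rStirling1 r n m')

/-- r-Stirling numbers of the second kind. -/
def rStirling2 (r : ℕ) : ℕ → ℕ → ℕ
  | 0, m => if r = 0 ∧ m = 0 then 1 else 0
  | n + 1, m =>
    if n + 1 < r then 0
    else if n + 1 = r then (if m = r then 1 else 0)
    else m * rStirling2 r n m + (match m with | 0 => 0 | m' + 1 => rStirling2 r n m')

/-- Poly-Cauchy numbers of the first kind `c_n^{(k)}`. -/
noncomputable def polyCauchy (k : ℤ) (n : ℕ) : ℝ :=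
  ∑ ℓ ∈ range (n + 1), (-1 : ℝ) ^ (n - ℓ) * stirling1 n ℓ / ((ℓ : ℝ) + 1) ^ k

/-- Poly-Cauchy numbers of the second kind `ĉ_n^{(k)}`. -/
noncomputable def polyCauchy2 (k : ℤ) (n : ℕ) : ℝ :=
  (-1 : ℝ) ^ n * ∑ ℓ ∈ range (n + 1), (stirling1 n ℓ : ℝ) / ((ℓ : ℝ) + 1) ^ k

/-- Poly-Cauchy polynomials of the first kind `c_n^{(k)}(z)`. -/
noncomputable def polyCauchyPoly (k : ℤ) (n : ℕ) (z : ℝ) : ℝ :=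
  ∑ m ∈ range (n + 1), (stirling1 n m : ℝ) * (-1 : ℝ) ^ (n - m) *
    ∑ i ∈ range (m + 1), (m.choose i : ℝ) * z ^ (m - i) / ((i : ℝ) + 1) ^ k

/-- Shifted poly-Cauchy numbers of the first kind `c_{n,α}^{(k)}`. -/
noncomputable def shiftedPolyCauchy (k : ℤ) (n : ℕ) (α : ℝ) : ℝ :=
  ∑ m ∈ range (n + 1), (stirling1 n m : ℝ) * (-1 : ℝ) ^ (n - m) / ((m : ℝ) + α) ^ k

/-- Shifted poly-Cauchy numbers of the second kind `ĉ_{n,α}^{(k)}`. -/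
noncomputable def shiftedPolyCauchy2 (k : ℤ) (n : ℕ) (α : ℝ) : ℝ :=
  (-1 : ℝ) ^ n * ∑ m ∈ range (n + 1), (stirling1 n m : ℝ) / ((m : ℝ) + α) ^ k

/-! The signed Stirling numbers of the first kind are the coefficients of the falling factorial
`(x)_j = x(x-1)⋯(x-j+1)`, so `c_j^{(k)} = L₁((x)_j)` for the linear functional
`L_α = cauchyFunctional k α : x^m ↦ (m+α)^{-k}` on polynomials, and `L_α(x·p) = L_{α+1}(p)`.
The r-Stirling numbers of the second kind expand `x^{n-r}(x)_r` in falling factorials,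
`∑_j S_r(n,j)(x)_j = x^{n-r}(x)_r` (multiply by `x = (x - j) + j` and compare with the
recurrence). Applying `L₁` gives `∑_j S_r(n,j) c_j^{(k)} = L_{n-r+1}((x)_r)`, which is the
right-hand side. -/

open Polynomial

theorem stirling1_eq_stirlingFirst : stirling1 = Nat.stirlingFirst := by
  funext n m
  induction n generalizing m with
  | zero => cases m <;> rfl
  | succ n ih =>
    cases m with
    | zero => rfl
    | succ m => rw [stirling1, Nat.stirlingFirst_succ_succ, ih, ih]

theorem coeff_descPochhammer {R : Type*} [CommRing R] (n m : ℕ) :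
    (descPochhammer R n).coeff m = (-1) ^ (n - m) * (Nat.stirlingFirst n m : R) := by
  induction n generalizing m with
  | zero => cases m <;> simp [coeff_one]
  | succ n ih =>
    rw [descPochhammer_succ_right, ← map_natCast C]
    cases m with
    | zero =>
      cases n <;> simp [mul_coeff_zero, ih]
    | succ m =>
      rw [coeff_mul_X_sub_C, ih, ih, Nat.stirlingFirst_succ_succ]
      rcases lt_or_ge m n with h | h
      · rw [Nat.add_sub_add_right, show n - m = n - (m + 1) + 1 by omega]
        push_cast
        ring
      · rw [Nat.stirlingFirst_eq_zero_of_lt (by omega : n < m + 1), Nat.add_sub_add_right]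
        push_cast
        ring

noncomputable def cauchyFunctional (k : ℤ) (α : ℝ) : ℝ[X] →ₗ[ℝ] ℝ :=
  lsum fun m => LinearMap.mulRight ℝ (((m : ℝ) + α) ^ k)⁻¹

theorem cauchyFunctional_eq_sum_range (k : ℤ) (α : ℝ) (p : ℝ[X]) {N : ℕ}
    (hN : p.natDegree < N) :
    cauchyFunctional k α p = ∑ m ∈ range N, p.coeff m / ((m : ℝ) + α) ^ k := by
  simp only [cauchyFunctional, lsum_apply, LinearMap.mulRight_apply, div_eq_mul_inv]
  exact sum_over_range' p (f := fun m c => c * (((m : ℝ) + α) ^ k)⁻¹) (fun _ => zero_mul _)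
    N hN

theorem cauchyFunctional_monomial (k : ℤ) (α : ℝ) (m : ℕ) (c : ℝ) :
    cauchyFunctional k α (monomial m c) = c / ((m : ℝ) + α) ^ k := by
  simp [cauchyFunctional, sum_monomial_index, div_eq_mul_inv]

theorem cauchyFunctional_X_mul (k : ℤ) (α : ℝ) (p : ℝ[X]) :
    cauchyFunctional k α (X * p) = cauchyFunctional k (α + 1) p := by
  induction p using Polynomial.induction_on' with
  | add p q hp hq => rw [mul_add, map_add, map_add, hp, hq]
  | monomial m c =>
    rw [X_mul_monomial, cauchyFunctional_monomial, cauchyFunctional_monomial]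
    push_cast
    ring_nf

theorem cauchyFunctional_X_pow_mul (k : ℤ) (α : ℝ) (i : ℕ) (p : ℝ[X]) :
    cauchyFunctional k α (X ^ i * p) = cauchyFunctional k (α + i) p := by
  induction i generalizing α with
  | zero => simp
  | succ i ih =>
    rw [pow_succ', mul_assoc, cauchyFunctional_X_mul, ih]
    push_cast
    ring_nf

theorem cauchyFunctional_descPochhammer (k : ℤ) (α : ℝ) (n : ℕ) :
    cauchyFunctional k α (descPochhammer ℝ n) =
      ∑ m ∈ range (n + 1),
        (-1) ^ (n - m) * (Nat.stirlingFirst n m : ℝ) / ((m : ℝ) + α) ^ k := by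
  rw [cauchyFunctional_eq_sum_range k α _ (N := n + 1) (by rw [descPochhammer_natDegree]; omega)]
  simp only [coeff_descPochhammer]

theorem polyCauchy_eq_cauchyFunctional (k : ℤ) (n : ℕ) :
    polyCauchy k n = cauchyFunctional k 1 (descPochhammer ℝ n) := by
  simp [polyCauchy, cauchyFunctional_descPochhammer, stirling1_eq_stirlingFirst]

theorem rStirling2_self (r m : ℕ) : rStirling2 r r m = if m = r then 1 else 0 := by
  cases r with
  | zero => simp [rStirling2]
  | succ r => simp [rStirling2]

theorem rStirling2_succ_zero (r n : ℕ) : rStirling2 r (n + 1) 0 = 0 := by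
  simp only [rStirling2]
  split_ifs <;> omega

theorem rStirling2_succ_succ {r n : ℕ} (h : r ≤ n) (m : ℕ) :
    rStirling2 r (n + 1) (m + 1) = (m + 1) * rStirling2 r n (m + 1) + rStirling2 r n m := by
  rw [rStirling2, if_neg (by omega), if_neg (by omega)]

theorem rStirling2_eq_zero_of_lt (r : ℕ) {n m : ℕ} (h : n < m) : rStirling2 r n m = 0 := by
  induction n generalizing m with
  | zero =>
    simp only [rStirling2]
    split_ifs <;> omega
  | succ n ih =>
    obtain ⟨m, rfl⟩ : ∃ m', m = m' + 1 := ⟨m - 1, by omega⟩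
    rcases lt_or_ge n r with hnr | hnr
    · simp only [rStirling2]
      split_ifs <;> omega
    · rw [rStirling2_succ_succ hnr, ih (by omega), ih (by omega), mul_zero]

theorem rStirling2_eq_zero_of_lt_r {r m : ℕ} (h : m < r) (n : ℕ) : rStirling2 r n m = 0 := by
  induction n generalizing m with
  | zero =>
    simp only [rStirling2]
    split_ifs <;> omega
  | succ n ih =>
    rcases lt_or_ge n r with hnr | hnr
    · simp only [rStirling2]
      split_ifs <;> omega
    · cases m with
      | zero => exact rStirling2_succ_zero r n
      | succ m => rw [rStirling2_succ_succ hnr, ih h, ih (by omega), mul_zero]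

theorem X_mul_descPochhammer (R : Type*) [CommRing R] (j : ℕ) :
    X * descPochhammer R j = descPochhammer R (j + 1) + j • descPochhammer R j := by
  rw [descPochhammer_succ_right, nsmul_eq_mul]
  ring

theorem sum_rStirling2_smul_descPochhammer (R : Type*) [CommRing R] {r n : ℕ} (h : r ≤ n) :
    ∑ j ∈ range (n + 1), rStirling2 r n j • descPochhammer R j =
      X ^ (n - r) * descPochhammer R r := by
  induction n, h using Nat.le_induction with
  | base => simp [rStirling2_self]
  | succ n hrn ih =>
    set g : ℕ → R[X] := fun j => (j * rStirling2 r n j) • descPochhammer R j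
    have hg : ∑ j ∈ range (n + 1), g (j + 1) = ∑ j ∈ range (n + 1), g j := by
      have h0 : g 0 = 0 := by simp [g]
      have hlast : g (n + 1) = 0 := by simp [g, rStirling2_eq_zero_of_lt r (Nat.lt_succ_self n)]
      have := sum_range_succ' g (n + 1)
      rwa [sum_range_succ, hlast, h0, add_zero, add_zero, eq_comm] at this
    calc ∑ j ∈ range (n + 1 + 1), rStirling2 r (n + 1) j • descPochhammer R j
        = ∑ j ∈ range (n + 1), rStirling2 r (n + 1) (j + 1) • descPochhammer R (j + 1) := by
          rw [sum_range_succ', rStirling2_succ_zero, zero_smul, add_zero]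
      _ = ∑ j ∈ range (n + 1), g (j + 1) +
            ∑ j ∈ range (n + 1), rStirling2 r n j • descPochhammer R (j + 1) := by
          simp only [g, ← sum_add_distrib, rStirling2_succ_succ hrn, add_smul]
      _ = ∑ j ∈ range (n + 1), rStirling2 r n j • (X * descPochhammer R j) := by
          rw [hg, ← sum_add_distrib]
          refine sum_congr rfl fun j _ => ?_
          rw [X_mul_descPochhammer, smul_add, smul_smul, mul_comm, add_comm]
      _ = X ^ (n + 1 - r) * descPochhammer R r := by
          simp_rw [← mul_smul_comm]
          rw [← mul_sum, ih, ← mul_assoc, ← pow_succ', Nat.sub_add_comm hrn]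

theorem stmt0 (n r : ℕ) (k : ℤ) (hr : 1 ≤ r) (hn : r ≤ n) :
    ∑ j ∈ Finset.Icc r n, (rStirling2 r n j : ℝ) * polyCauchy k j =
      ∑ ℓ ∈ Finset.Icc 1 r, (-1 : ℝ) ^ (r - ℓ) / ((n + ℓ - r + 1 : ℕ) : ℝ) ^ k *
        (stirling1 r ℓ : ℝ) := by
  have hLHS : ∑ j ∈ Icc r n, (rStirling2 r n j : ℝ) * polyCauchy k j =
      cauchyFunctional k 1 (X ^ (n - r) * descPochhammer ℝ r) := by
    rw [← sum_rStirling2_smul_descPochhammer ℝ hn, map_sum]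
    refine sum_subset (fun j hj => ?_) (fun j hj' hj => ?_) |>.trans
      (sum_congr rfl fun j _ => ?_)
    · simp only [mem_Icc, mem_range] at hj ⊢; omega
    · have hjr : j < r := by simp only [mem_Icc, mem_range] at hj hj'; omega
      rw [rStirling2_eq_zero_of_lt_r hjr, Nat.cast_zero, zero_mul]
    · rw [map_nsmul, nsmul_eq_mul, polyCauchy_eq_cauchyFunctional]
  rw [hLHS, cauchyFunctional_X_pow_mul, cauchyFunctional_descPochhammer,
    ← sum_subset (s₁ := Icc 1 r) (s₂ := range (r + 1))]
  · refine sum_congr rfl fun ℓ _ => ?_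
    rw [stirling1_eq_stirlingFirst, show n + ℓ - r + 1 = ℓ + 1 + (n - r) by omega]
    push_cast
    rw [div_mul_eq_mul_div, add_assoc]
  · intro j hj; simp only [mem_Icc, mem_range] at hj ⊢; omega
  · intro j hj hj'
    obtain rfl : j = 0 := by simp only [mem_Icc, mem_range] at hj hj'; omega
    obtain ⟨r, rfl⟩ := Nat.exists_eq_add_of_le' hr
    simp
end

section
/- Let 1 ≤ r ≤ n and 1 ≤ m ≤ n-r+1. Then ∑_{ℓ=1}^{m} s(r,ℓ) · s_r(n, r-ℓ+m) = s(n,m), where s(n,m) denotes the unsigned Stirling numbers of the first kind and s_r(n,j) the unsigned r-Stirling numbers of the first kind. -/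
open Finset

/-!
Both sides satisfy the recurrence `a(n+1, m+1) = n · a(n, m+1) + a(n, m)` in `n ≥ r`: the
right side by definition, the left side termwise from the r-Stirling recurrence, where the extra
term `ℓ = m + 1` of the shifted sum vanishes because either `s(r, ℓ) = 0` or `s_r(n, r - 1) = 0`.
At `n = r` we have `s_r(r, j) = δ_{j,r}`, so only `ℓ = m` survives and the sum is `s(r, m)`.
-/

theorem stirling1_succ_succ (n k : ℕ) :
    stirling1 (n + 1) (k + 1) = n * stirling1 n (k + 1) + stirling1 n k := rfl

theorem stirling1_eq_zero_of_lt {n k : ℕ} (h : n < k) : stirling1 n k = 0 := by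
  induction n generalizing k with
  | zero => obtain ⟨k, rfl⟩ := Nat.exists_eq_succ_of_ne_zero (by omega : k ≠ 0); rfl
  | succ n ih =>
    obtain ⟨k, rfl⟩ := Nat.exists_eq_succ_of_ne_zero (by omega : k ≠ 0)
    rw [stirling1_succ_succ, ih (by omega : n < k + 1), ih (by omega : n < k), mul_zero]

theorem rStirling1_eq_zero_of_lt {r j : ℕ} (n : ℕ) (h : j < r) : rStirling1 r n j = 0 := by
  induction n generalizing j with
  | zero => simp only [rStirling1]; rw [if_neg (by omega)]
  | succ n ih =>
    simp only [rStirling1]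
    split_ifs
    · rfl
    · omega
    · rfl
    · cases j with
      | zero => simp only [ih h, mul_zero]
      | succ j => simp only [ih h, ih (by omega : j < r), mul_zero, add_zero]

theorem rStirling1_self (r j : ℕ) : rStirling1 r r j = if j = r then 1 else 0 := by
  cases r <;> simp [rStirling1]

theorem rStirling1_succ_succ {r n : ℕ} (h : r ≤ n) (j : ℕ) :
    rStirling1 r (n + 1) (j + 1) = n * rStirling1 r n (j + 1) + rStirling1 r n j := by
  simp only [rStirling1]
  rw [if_neg (by omega), if_neg (by omega)]

theorem sum_stirling1_mul_rStirling1_self {r : ℕ} (hr : 1 ≤ r) (m : ℕ) :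
    ∑ ℓ ∈ Icc 1 m, stirling1 r ℓ * rStirling1 r r (r - ℓ + m) = stirling1 r m := by
  rcases Nat.eq_zero_or_pos m with rfl | hm
  · obtain ⟨r, rfl⟩ := Nat.exists_eq_add_of_le' hr
    rfl
  rw [sum_eq_single_of_mem m (mem_Icc.mpr ⟨hm, le_rfl⟩)]
  · rcases le_or_gt m r with hmr | hrm
    · rw [Nat.sub_add_cancel hmr, rStirling1_self, if_pos rfl, mul_one]
    · rw [stirling1_eq_zero_of_lt hrm, zero_mul]
  · intro ℓ _ hℓm
    rcases le_or_gt ℓ r with hℓr | hrℓ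
    · rw [rStirling1_self, if_neg (by omega), mul_zero]
    · rw [stirling1_eq_zero_of_lt hrℓ, zero_mul]

theorem sum_stirling1_mul_rStirling1 {r : ℕ} (hr : 1 ≤ r) {n : ℕ} (hn : r ≤ n) (m : ℕ) :
    ∑ ℓ ∈ Icc 1 m, stirling1 r ℓ * rStirling1 r n (r - ℓ + m) = stirling1 n m := by
  induction n, hn using Nat.le_induction generalizing m with
  | base => exact sum_stirling1_mul_rStirling1_self hr m
  | succ n hn ih =>
    cases m with
    | zero => rfl
    | succ m =>
      have hsplit : ∀ ℓ ∈ Icc 1 (m + 1),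
          stirling1 r ℓ * rStirling1 r (n + 1) (r - ℓ + (m + 1)) =
            n * (stirling1 r ℓ * rStirling1 r n (r - ℓ + (m + 1))) +
              stirling1 r ℓ * rStirling1 r n (r - ℓ + m) := by
        intro ℓ _
        rw [← add_assoc, rStirling1_succ_succ hn]
        ring
      have hlast : stirling1 r (m + 1) * rStirling1 r n (r - (m + 1) + m) = 0 := by
        rcases le_or_gt (m + 1) r with hmr | hrm
        · rw [rStirling1_eq_zero_of_lt n (by omega), mul_zero]
        · rw [stirling1_eq_zero_of_lt hrm, zero_mul]
      rw [sum_congr rfl hsplit, sum_add_distrib, ← mul_sum, ih (m + 1),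
        sum_Icc_succ_top (by omega), hlast, add_zero, ih m, stirling1_succ_succ]

theorem stmt8_general (n r m : ℕ) (hr : 1 ≤ r) (hn : r ≤ n) :
    ∑ ℓ ∈ Finset.Icc 1 m, stirling1 r ℓ * rStirling1 r n (r - ℓ + m) =
      stirling1 n m :=
  sum_stirling1_mul_rStirling1 hr hn m

theorem stmt8 (n r m : ℕ) (hr : 1 ≤ r) (hn : r ≤ n) (hm : 1 ≤ m)
    (hm' : m ≤ n - r + 1) :
    ∑ ℓ ∈ Finset.Icc 1 m, stirling1 r ℓ * rStirling1 r n (r - ℓ + m) =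
      stirling1 n m :=
  stmt8_general n r m hr hn
end
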